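/- arXiv:2602.10777 — 4 statements merged into one kernel-verified Lean document; each statement's English description precedes it below -/
import Mathlib

section
/- Let p be prime, 1 ≤ k, and r = (p^{k+1} - 1)/(p - 1). If B ⊆ Z_r is a set such that all sums of k elements (with repetition, i.e., all multisets of size k from B) have distinct sums modulo r, and Φ: {1,...,n} → B is injective, then the colouring of m-subsets S ↦ Σ_{a∈S} Φ(a) mod r is a proper colouring of J(n,m,t) with k = m - t: any two distinct m-subsets with the same colour intersect in at most t-1 elements. -/
/-- Graham–Sloane colouring via Bose–Chowla sets: if `B ⊆ Z_r` (with
`r = (p^{k+1}-1)/(p-1)`, `p` prime, `k = m - t ≥ 1`) has all sums of multisets of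
size `k` from `B` pairwise distinct, and `Φ : {1,…,n} → B` is injective, then any two
distinct `m`-subsets `S, T` with `Σ_{a∈S} Φ(a) = Σ_{a∈T} Φ(a)` in `Z_r` intersect in
at most `t - 1` elements; i.e. the colouring `S ↦ Σ_{a∈S} Φ(a)` is a proper colouring
of `J(n,m,t)`. -/
theorem boseChowla_colouring_proper (p k r n m t : ℕ) (hp : p.Prime) (hk : 1 ≤ k)
    (hr : r = (p ^ (k + 1) - 1) / (p - 1)) (hkmt : k = m - t)
    (ht : 1 ≤ t) (htm : t ≤ m - 1) (hmn : m ≤ n)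
    (B : Finset (ZMod r))
    (hB : ∀ M N : Multiset (ZMod r), (∀ x ∈ M, x ∈ B) → (∀ x ∈ N, x ∈ B) →
      Multiset.card M = k → Multiset.card N = k → M.sum = N.sum → M = N)
    (Φ : Fin n → ZMod r) (hΦinj : Function.Injective Φ) (hΦB : ∀ i, Φ i ∈ B) :
    ∀ S T : Finset (Fin n), S.card = m → T.card = m → S ≠ T →
      (∑ a ∈ S, Φ a) = (∑ a ∈ T, Φ a) → (S ∩ T).card ≤ t - 1 := by
  intro S T hS hT hST hsum
  by_contra hcon
  push_neg at hcon
  have hi : t ≤ (S ∩ T).card := by omega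
  have hiS : (S ∩ T).card ≤ m := hS ▸ Finset.card_le_card Finset.inter_subset_left
  -- cardinality of the differences
  have hcS : (S \ T).card = m - (S ∩ T).card := by
    have := Finset.card_inter_add_card_sdiff S T
    omega
  have hcT : (T \ S).card = m - (S ∩ T).card := by
    have := Finset.card_inter_add_card_sdiff T S
    rw [Finset.inter_comm] at this
    omega
  set c := m - (S ∩ T).card with hc
  have hck : c ≤ k := by omega
  -- sums over differences are equal
  have hsum' : (∑ a ∈ S \ T, Φ a) = (∑ a ∈ T \ S, Φ a) := by
    have h1 := Finset.sum_inter_add_sum_sdiff S T Φ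
    have h2 := Finset.sum_inter_add_sum_sdiff T S Φ
    rw [Finset.inter_comm] at h2
    rw [← h1, ← h2] at hsum
    exact add_left_cancel hsum
  have hn : 0 < n := by omega
  set b : ZMod r := Φ ⟨0, hn⟩ with hb
  set M : Multiset (ZMod r) := (S \ T).val.map Φ + Multiset.replicate (k - c) b with hM
  set N : Multiset (ZMod r) := (T \ S).val.map Φ + Multiset.replicate (k - c) b with hN
  have hMB : ∀ x ∈ M, x ∈ B := by
    intro x hx
    rw [hM, Multiset.mem_add] at hx
    rcases hx with hx | hx
    · obtain ⟨i, _, rfl⟩ := Multiset.mem_map.mp hx; exact hΦB i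
    · rw [Multiset.eq_of_mem_replicate hx]; exact hΦB _
  have hNB : ∀ x ∈ N, x ∈ B := by
    intro x hx
    rw [hN, Multiset.mem_add] at hx
    rcases hx with hx | hx
    · obtain ⟨i, _, rfl⟩ := Multiset.mem_map.mp hx; exact hΦB i
    · rw [Multiset.eq_of_mem_replicate hx]; exact hΦB _
  have hcardM : Multiset.card M = k := by
    have h : Multiset.card (S \ T).val = c := hcS
    rw [hM]; simp only [Multiset.card_add, Multiset.card_map, Multiset.card_replicate]; omega
  have hcardN : Multiset.card N = k := by
    have h : Multiset.card (T \ S).val = c := hcT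
    rw [hN]; simp only [Multiset.card_add, Multiset.card_map, Multiset.card_replicate]; omega
  have hsumMN : M.sum = N.sum := by
    have h : ((S \ T).val.map Φ).sum = ((T \ S).val.map Φ).sum := hsum'
    rw [hM, hN, Multiset.sum_add, Multiset.sum_add, h]
  have hMN := hB M N hMB hNB hcardM hcardN hsumMN
  rw [hM, hN] at hMN
  have hmaps : (S \ T).val.map Φ = (T \ S).val.map Φ := add_right_cancel hMN
  have hvals : (S \ T).val = (T \ S).val := Multiset.map_injective hΦinj hmaps
  have hdiff : S \ T = T \ S := Finset.val_injective hvals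
  have hempty : S \ T = ∅ := by
    have hd : Disjoint (S \ T) (T \ S) := disjoint_sdiff_sdiff
    rw [hdiff] at hd
    rw [hdiff]
    exact disjoint_self.mp hd
  have hsub : S ⊆ T := by
    intro x hx
    by_contra hxT
    exact (Finset.notMem_empty x) (hempty ▸ Finset.mem_sdiff.mpr ⟨hx, hxT⟩)
  exact hST (Finset.eq_of_subset_of_card_le hsub (by omega))
end

section
/- (Singleton-like bound for rank-metric codes) If C is a set of m×h matrices over F_q such that rk(A - B) ≥ d for all distinct A, B ∈ C, where 1 ≤ d ≤ min(m,h), then |C| ≤ q^{max(m,h)·(min(m,h) - d + 1)}. -/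
lemma rank_metric_key (F : Type) [Field F] [Fintype F] (m h d : ℕ)
    (hd1 : 1 ≤ d) (hdm : d ≤ m)
    (C : Finset (Matrix (Fin m) (Fin h) F))
    (hC : ∀ A ∈ C, ∀ B ∈ C, A ≠ B → d ≤ (A - B).rank) :
    C.card ≤ Fintype.card F ^ (h * (m - d + 1)) := by
  have hle : m - d + 1 ≤ m := by omega
  set Φ : Matrix (Fin m) (Fin h) F → Matrix (Fin (m - d + 1)) (Fin h) F :=
    fun M => M.submatrix (Fin.castLE hle) id with hΦ
  have hinj : Set.InjOn Φ C := by
    intro A hA B hB hAB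
    by_contra hne
    have hd := hC A hA B hB hne
    set M := A - B with hM
    have hrow : ∀ i : Fin m, (i : ℕ) < m - d + 1 → ∀ j, M i j = 0 := by
      intro i hi j
      have := congrFun (congrFun hAB ⟨i, hi⟩) j
      simp only [hΦ, Matrix.submatrix_apply, id_eq] at this
      simp [hM, Matrix.sub_apply]
      have h2 : Fin.castLE hle ⟨(i : ℕ), hi⟩ = i := by ext; rfl
      rw [h2] at this
      exact sub_eq_zero_of_eq this
    -- factor M = P * Q
    have hemb : ∀ k : Fin (d - 1), m - d + 1 + (k : ℕ) < m := by
      intro k; have := k.isLt; omega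
    set emb : Fin (d - 1) → Fin m := fun k => ⟨m - d + 1 + k, hemb k⟩ with hembdef
    set P : Matrix (Fin m) (Fin (d - 1)) F := fun i k => if i = emb k then 1 else 0
    set Q : Matrix (Fin (d - 1)) (Fin h) F := fun k j => M (emb k) j with hQ
    have hfac : M = P * Q := by
      ext i j
      rw [Matrix.mul_apply]
      rcases lt_or_ge (i : ℕ) (m - d + 1) with hi | hi
      · rw [hrow i hi j]
        refine (Finset.sum_eq_zero fun k _ => ?_).symm
        have : i ≠ emb k := by
          intro he
          have : (i : ℕ) = m - d + 1 + k := by rw [he]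
          omega
        simp [P, this]
      · set k0 : Fin (d - 1) := ⟨(i : ℕ) - (m - d + 1), by have := i.isLt; omega⟩
        have hik0 : i = emb k0 := by
          ext
          simp [hembdef, k0]
          omega
        rw [Finset.sum_eq_single k0]
        · simp [P, Q, hik0]
        · intro k _ hk
          have : i ≠ emb k := by
            intro he
            apply hk
            ext
            have h1 : (i : ℕ) = m - d + 1 + k := by rw [he]
            simp [k0]; omega
          simp [P, this]
        · intro hk; exact absurd (Finset.mem_univ _) hk
    have : M.rank ≤ d - 1 := by
      rw [hfac]
      calc (P * Q).rank ≤ Q.rank := Matrix.rank_mul_le_right P Q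
        _ ≤ Fintype.card (Fin (d - 1)) := Matrix.rank_le_card_height Q
        _ = d - 1 := Fintype.card_fin _
    omega
  calc C.card ≤ Fintype.card (Matrix (Fin (m - d + 1)) (Fin h) F) := by
        rw [← Finset.card_univ]
        exact Finset.card_le_card_of_injOn Φ (fun _ _ => Finset.mem_univ _) hinj
    _ = Fintype.card F ^ (h * (m - d + 1)) := by
        rw [show Fintype.card (Matrix (Fin (m - d + 1)) (Fin h) F)
            = Fintype.card (Fin (m - d + 1) → Fin h → F) from rfl]
        simp [Fintype.card_fun, ← pow_mul, Nat.mul_comm]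

/-- Singleton-like bound: a rank-metric code `C ⊆ M_{m×h}(F_q)` with minimum rank
distance `d` satisfies `|C| ≤ q^{max(m,h)·(min(m,h)-d+1)}`. -/
theorem singleton_bound_rank_metric (F : Type) [Field F] [Fintype F] (m h d : ℕ)
    (hm : 1 ≤ m) (hh : 1 ≤ h) (hd1 : 1 ≤ d) (hd2 : d ≤ min m h)
    (C : Finset (Matrix (Fin m) (Fin h) F))
    (hC : ∀ A ∈ C, ∀ B ∈ C, A ≠ B → d ≤ (A - B).rank) :
    C.card ≤ Fintype.card F ^ (max m h * (min m h - d + 1)) := by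
  classical
  rcases le_total m h with hmh | hmh
  · rw [min_eq_left hmh, max_eq_right hmh]
    exact rank_metric_key F m h d hd1 (le_trans hd2 (min_le_left m h)) C hC
  · rw [min_eq_right hmh, max_eq_left hmh]
    have htr : Function.Injective (Matrix.transpose : Matrix (Fin m) (Fin h) F → _) :=
      fun A B hAB => by simpa using congrArg Matrix.transpose hAB
    have := rank_metric_key F h m d hd1 (le_trans hd2 (min_le_right m h))
      (C.image Matrix.transpose) (by
        intro A hA B hB hne
        simp only [Finset.mem_image] at hA hB
        obtain ⟨A', hA', rfl⟩ := hA
        obtain ⟨B', hB', rfl⟩ := hB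
        have hne' : A' ≠ B' := fun he => hne (by rw [he])
        have := hC A' hA' B' hB' hne'
        rw [← Matrix.transpose_sub, Matrix.rank_transpose]
        exact this)
    rwa [Finset.card_image_of_injective _ htr] at this
end

section
/- For m ≤ h and 1 ≤ d ≤ m, there exists an F_q-linear subspace C of M_{m×h}(F_q) with |C| = q^{h(m-d+1)} such that every nonzero matrix in C has rank at least d (i.e., an MRD code exists for all admissible parameters). -/
open Module Polynomial

section QPoly

variable (F K : Type) [Field F] [Fintype F] [Field K] [Algebra F K]

theorem MRD.pow_card_pow_add (x y : K) (k : ℕ) :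
    (x + y) ^ (Fintype.card F) ^ k = x ^ (Fintype.card F) ^ k + y ^ (Fintype.card F) ^ k := by
  set p := ringChar F with hp
  haveI : CharP F p := ringChar.charP F
  have hpp : p.Prime := CharP.char_is_prime F p
  haveI : Fact p.Prime := ⟨hpp⟩
  haveI : CharP K p := (Algebra.charP_iff F K p).mp ‹_›
  obtain ⟨t, -, hcard⟩ := FiniteField.card F p
  rw [hcard, ← pow_mul, add_pow_char_pow]

/-- The `F`-linear map `x ↦ ∑ aₖ x^{q^k}` on `K` given by a linearized `q`-polynomial. -/
noncomputable def MRD.qpoly (N : ℕ) (a : Fin N → K) : K →ₗ[F] K where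
  toFun x := ∑ k : Fin N, a k * x ^ (Fintype.card F) ^ (k : ℕ)
  map_add' x y := by
    rw [← Finset.sum_add_distrib]
    exact Finset.sum_congr rfl fun k _ => by rw [MRD.pow_card_pow_add F K, mul_add]
  map_smul' c x := by
    simp only [RingHom.id_apply, Algebra.smul_def, Finset.mul_sum]
    exact Finset.sum_congr rfl fun k _ => by
      rw [mul_pow, ← map_pow, FiniteField.pow_card_pow]; ring

theorem MRD.qpoly_apply (N : ℕ) (a : Fin N → K) (x : K) :
    MRD.qpoly F K N a x = ∑ k : Fin N, a k * x ^ (Fintype.card F) ^ (k : ℕ) := rfl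

/-- Kernel dimension bound: a nonzero `q`-polynomial with `N` coefficients has kernel of
`F`-dimension at most `N - 1`. -/
theorem MRD.finrank_ker_qpoly_le [Fintype K] (N : ℕ) (a : Fin N → K) (ha : a ≠ 0) :
    finrank F (LinearMap.ker (MRD.qpoly F K N a)) ≤ N - 1 := by
  classical
  set q := Fintype.card F with hq
  have hq1 : 1 < q := Fintype.one_lt_card
  set P : K[X] := ∑ k : Fin N, C (a k) * X ^ q ^ (k : ℕ) with hP
  obtain ⟨j, hj⟩ : ∃ j, a j ≠ 0 := by
    by_contra hc; push_neg at hc; exact ha (funext hc)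
  have hcoeff : P.coeff (q ^ (j : ℕ)) = a j := by
    rw [hP, finset_sum_coeff]
    rw [Finset.sum_eq_single j]
    · simp [coeff_X_pow]
    · intro k _ hk
      simp only [coeff_C_mul, coeff_X_pow]
      rw [if_neg, mul_zero]
      exact fun hqe => hk (Fin.ext (Nat.pow_right_injective hq1 hqe.symm))
    · simp
  have hP0 : P ≠ 0 := fun hc => hj (by rw [← hcoeff, hc, coeff_zero])
  have hdeg : P.natDegree ≤ q ^ (N - 1) := by
    refine natDegree_sum_le_of_forall_le _ _ fun k _ => ?_
    refine (natDegree_C_mul_le _ _).trans ?_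
    rw [natDegree_X_pow]
    exact Nat.pow_le_pow_right (by omega) (by omega)
  have hroot : ∀ x : K, x ∈ LinearMap.ker (MRD.qpoly F K N a) → x ∈ P.roots.toFinset := by
    intro x hx
    rw [Multiset.mem_toFinset, mem_roots hP0]
    rw [LinearMap.mem_ker, MRD.qpoly_apply] at hx
    rw [IsRoot.def, hP, eval_finset_sum]
    simpa using hx
  haveI : Fintype ↥(LinearMap.ker (MRD.qpoly F K N a)) := Fintype.ofFinite _
  have hcard : Fintype.card ↥(LinearMap.ker (MRD.qpoly F K N a)) ≤ q ^ (N - 1) := by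
    have h1 : Fintype.card ↥(LinearMap.ker (MRD.qpoly F K N a)) ≤ P.roots.toFinset.card := by
      have := Fintype.card_le_of_injective
        (fun z : ↥(LinearMap.ker (MRD.qpoly F K N a)) =>
          (⟨z.1, hroot z.1 z.2⟩ : {x // x ∈ P.roots.toFinset}))
        (fun z w hzw => Subtype.ext (by simpa [Subtype.mk_eq_mk] using hzw))
      rwa [Fintype.card_coe] at this
    exact h1.trans ((P.roots.toFinset_card_le.trans (P.card_roots' )).trans hdeg)
  rw [card_eq_pow_finrank (K := F)] at hcard
  exact (Nat.pow_le_pow_iff_right hq1).mp hcard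

end QPoly

theorem MRD.exists_finite_ext (F : Type) [Field F] [Fintype F] (h : ℕ) (hh : h ≠ 0) :
    ∃ (K : Type) (_ : Field K) (_ : Algebra F K) (_ : Fintype K),
      FiniteDimensional F K ∧ Module.finrank F K = h := by
  classical
  set p := ringChar F with hpdef
  haveI : CharP F p := ringChar.charP F
  have hpp : p.Prime := CharP.char_is_prime F p
  haveI : Fact p.Prime := ⟨hpp⟩
  obtain ⟨t, -, hcard⟩ := FiniteField.card F p
  set q := Fintype.card F with hq
  have hq1 : 1 < q := Fintype.one_lt_card
  set g : F[X] := X ^ q ^ h - X with hg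
  set K := g.SplittingField with hK
  haveI : CharP K p := (Algebra.charP_iff F K p).mp ‹_›
  haveI : Finite K := inferInstance
  haveI fK : Fintype K := Fintype.ofFinite K
  refine ⟨K, inferInstance, inferInstance, fK, inferInstance, ?_⟩
  have aux : g ≠ 0 := FiniteField.X_pow_card_pow_sub_X_ne_zero _ hh hq1
  have hpq : p ∣ q ^ h := (hcard ▸ dvd_pow_self p t.pos.ne').trans (dvd_pow_self q hh)
  have hsep : g.Separable := galois_poly_separable p (q ^ h) hpq
  have key : Fintype.card (g.rootSet K) = g.natDegree :=
    card_rootSet_eq_natDegree hsep (SplittingField.splits g)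
  have nd : g.natDegree = q ^ h := FiniteField.X_pow_card_pow_sub_X_natDegree_eq _ hh hq1
  have hqh : q ^ h = p ^ (t * h) := by rw [hcard, ← pow_mul]
  have huniv : g.rootSet K = Set.univ := by
    rw [Set.eq_univ_iff_forall]
    suffices H : ∀ x, x ∈ (⊤ : Subalgebra F K) → x ∈ g.rootSet K by
      intro x; exact H x trivial
    rw [← SplittingField.adjoin_rootSet]
    simp_rw [Algebra.mem_adjoin_iff]
    intro x hx
    have hadd : ∀ x y : K, (x + y) ^ q ^ h = x ^ q ^ h + y ^ q ^ h := by
      intro x y; rw [hqh]; exact add_pow_char_pow ..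
    have hneg1 : (-1 : K) ^ q ^ h = -1 := by rw [hqh]; exact neg_one_pow_char_pow ..
    have hqh0 : q ^ h ≠ 0 := (pow_pos (by omega) h).ne'
    refine Subring.closure_induction ?_ ?_ ?_ ?_ ?_ ?_ hx <;>
      simp_rw [mem_rootSet_of_ne aux, hg, map_sub, map_pow, aeval_X, sub_eq_zero]
    · rintro x (⟨r, rfl⟩ | hx)
      · rw [← map_pow, FiniteField.pow_card_pow]
      · rw [mem_rootSet_of_ne aux] at hx
        simp only [hg, map_sub, map_pow, aeval_X, sub_eq_zero] at hx
        exact hx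
    · rw [zero_pow hqh0]
    · rw [one_pow]
    · intro x y _ _ hx hy
      rw [hadd, hx, hy]
    · intro x _ hx
      rw [neg_pow, hneg1, hx, neg_one_mul]
    · intro x y _ _ hx hy
      rw [mul_pow, hx, hy]
  have hcardK : Fintype.card K = q ^ h := by
    have h1 : Nat.card ↥(g.rootSet K) = Nat.card K := by
      rw [huniv]; exact Nat.card_congr (Equiv.Set.univ K)
    rw [← Nat.card_eq_fintype_card, ← h1, Nat.card_eq_fintype_card, key, nd]
  have := card_eq_pow_finrank (K := F) (V := K)
  rw [hcardK, ← hq] at this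
  exact (Nat.pow_right_injective hq1 this.symm)

section Main

variable (F K : Type) [Field F] [Fintype F] [Field K] [Algebra F K]

/-- The evaluation-matrix linear map underlying the Delsarte–Gabidulin construction. -/
noncomputable def MRD.phi (m h N : ℕ) (b : Basis (Fin h) F K) (e : Fin m → K) :
    (Fin N → K) →ₗ[F] Matrix (Fin m) (Fin h) F where
  toFun a := Matrix.of fun i j => b.coord j (MRD.qpoly F K N a (e i))
  map_add' a a' := by
    ext i j
    simp only [Matrix.of_apply, Matrix.add_apply, ← map_add]
    congr 1
    simp only [MRD.qpoly_apply, Pi.add_apply, add_mul, Finset.sum_add_distrib]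
  map_smul' c a := by
    ext i j
    simp only [Matrix.of_apply, RingHom.id_apply, Matrix.smul_apply, smul_eq_mul]
    rw [show MRD.qpoly F K N (c • a) (e i) = c • MRD.qpoly F K N a (e i) by
      simp only [MRD.qpoly_apply, Pi.smul_apply, Finset.smul_sum, smul_mul_assoc],
      map_smul, smul_eq_mul]

theorem MRD.main (F K : Type) [Field F] [Fintype F] [Field K] [Algebra F K] [Fintype K]
    [FiniteDimensional F K] (m h d : ℕ) (hmh : m ≤ h) (hd1 : 1 ≤ d) (hd2 : d ≤ m)
    (hrk : Module.finrank F K = h) :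
    ∃ C : Submodule F (Matrix (Fin m) (Fin h) F),
      Nat.card C = Fintype.card F ^ (h * (m - d + 1)) ∧
      ∀ A ∈ C, A ≠ 0 → d ≤ A.rank := by
  classical
  set q := Fintype.card F with hq
  have hq1 : 1 < q := Fintype.one_lt_card
  set n := m - d with hn
  have hnm : n < m := by omega
  set b : Basis (Fin h) F K := finBasisOfFinrankEq F K hrk with hb
  set e : Fin m → K := fun i => b (Fin.castLE hmh i) with he
  have he_li : LinearIndependent F e :=
    b.linearIndependent.comp _ (Fin.castLE_injective hmh)
  set Φ := MRD.phi F K m h (n + 1) b e with hΦ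
  -- the linear combination map
  set T : (Fin m → F) →ₗ[F] K :=
    { toFun := fun x => ∑ i : Fin m, x i • e i
      map_add' := fun x y => by
        simp only [Pi.add_apply, add_smul, Finset.sum_add_distrib]
      map_smul' := fun c x => by
        simp only [Pi.smul_apply, RingHom.id_apply, smul_eq_mul, Finset.smul_sum,
          smul_smul] } with hT
  have hT_inj : Function.Injective T := by
    rw [injective_iff_map_eq_zero]
    intro x hx
    funext i
    exact Fintype.linearIndependent_iff.mp he_li x hx i
  -- key computation: the rows of Φ a encode the values of the q-polynomial
  have hvec : ∀ (a : Fin (n + 1) → K) (x : Fin m → F),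
      (Φ a).vecMulLinear x = fun j => b.coord j (MRD.qpoly F K (n + 1) a (T x)) := by
    intro a x
    funext j
    simp only [Matrix.vecMulLinear_apply, Matrix.vecMul, dotProduct]
    have : ∀ i : Fin m, x i * (Φ a) i j = b.coord j (x i • MRD.qpoly F K (n + 1) a (e i)) := by
      intro i
      rw [map_smul, smul_eq_mul]
      rfl
    simp_rw [this, ← map_sum, ← map_smul, ← map_sum]
    rfl
  have hzero : ∀ (a : Fin (n + 1) → K) (x : Fin m → F),
      (Φ a).vecMulLinear x = 0 ↔ MRD.qpoly F K (n + 1) a (T x) = 0 := by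
    intro a x
    rw [hvec a x]
    constructor
    · intro hxx
      have : ∀ j, b.coord j (MRD.qpoly F K (n + 1) a (T x)) = 0 := fun j => congrFun hxx j
      have hrepr : b.repr (MRD.qpoly F K (n + 1) a (T x)) = 0 :=
        Finsupp.ext fun j => this j
      simpa using b.repr.map_eq_zero_iff.mp hrepr
    · intro hxx
      funext j
      rw [hxx, map_zero]; rfl
  -- injectivity of Φ
  have hΦ_inj : Function.Injective Φ := by
    rw [injective_iff_map_eq_zero]
    intro a hA
    by_contra ha
    have hker : ∀ i : Fin m, MRD.qpoly F K (n + 1) a (e i) = 0 := by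
      intro i
      have : ∀ j, b.coord j (MRD.qpoly F K (n + 1) a (e i)) = 0 := by
        intro j
        have := congrFun (congrFun hA i) j
        simpa [hΦ, MRD.phi] using this
      have hrepr : b.repr (MRD.qpoly F K (n + 1) a (e i)) = 0 := Finsupp.ext fun j => this j
      simpa using b.repr.map_eq_zero_iff.mp hrepr
    have hspan : Submodule.span F (Set.range e) ≤ LinearMap.ker (MRD.qpoly F K (n + 1) a) := by
      rw [Submodule.span_le]
      rintro _ ⟨i, rfl⟩
      exact hker i
    have h1 : finrank F (Submodule.span F (Set.range e)) = m := by
      rw [finrank_span_eq_card he_li, Fintype.card_fin]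
    have h2 := Submodule.finrank_mono hspan
    have h3 := MRD.finrank_ker_qpoly_le F K (n + 1) a ha
    omega
  refine ⟨LinearMap.range Φ, ?_, ?_⟩
  · have h1 : Nat.card ↥(LinearMap.range Φ) = Nat.card ↥(Set.range Φ) := by
      apply Nat.card_congr
      exact Equiv.subtypeEquivRight fun x => by
        simp [LinearMap.mem_range, Set.mem_range]
    rw [h1, ← Nat.card_congr (Equiv.ofInjective Φ hΦ_inj), Nat.card_fun]
    have : Nat.card K = q ^ h := by
      rw [Nat.card_eq_fintype_card, card_eq_pow_finrank (K := F), hrk]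
    rw [this, Nat.card_eq_fintype_card, Fintype.card_fin, ← pow_mul]
  · rintro A ⟨a, rfl⟩ hA0
    have ha : a ≠ 0 := by
      rintro rfl
      exact hA0 (map_zero Φ)
    -- bound the kernel of vecMulLinear
    have hker_le : finrank F (LinearMap.ker (Φ a).vecMulLinear) ≤ n := by
      have hmaps : ∀ x ∈ LinearMap.ker (Φ a).vecMulLinear,
          T x ∈ LinearMap.ker (MRD.qpoly F K (n + 1) a) := by
        intro x hx
        rw [LinearMap.mem_ker] at hx ⊢
        exact (hzero a x).mp hx
      set S := T.restrict hmaps with hS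
      have hS_inj : Function.Injective S := by
        intro x y hxy
        have : T x.1 = T y.1 := congrArg Subtype.val hxy
        exact Subtype.ext (hT_inj this)
      have := LinearMap.finrank_le_finrank_of_injective hS_inj
      have h3 := MRD.finrank_ker_qpoly_le F K (n + 1) a ha
      simp only [Nat.add_sub_cancel] at h3
      omega
    have hrank : (Φ a).rank = finrank F (LinearMap.range (Φ a).vecMulLinear) := by
      rw [← Matrix.rank_transpose, Matrix.rank, Matrix.mulVecLin_transpose]
    have hrn := LinearMap.finrank_range_add_finrank_ker (Φ a).vecMulLinear
    rw [Module.finrank_fin_fun] at hrn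
    omega

end Main

open Module

/-- Existence of linear MRD codes: for `m ≤ h` and `1 ≤ d ≤ m` there is an `F_q`-linear
subspace `C` of `M_{m×h}(F_q)` of size `q^{h(m-d+1)}` in which every nonzero matrix has
rank at least `d`. -/
theorem exists_MRD_code (F : Type) [Field F] [Fintype F] (m h d : ℕ)
    (hmh : m ≤ h) (hd1 : 1 ≤ d) (hd2 : d ≤ m) :
    ∃ C : Submodule F (Matrix (Fin m) (Fin h) F),
      Nat.card C = Fintype.card F ^ (h * (m - d + 1)) ∧
      ∀ A ∈ C, A ≠ 0 → d ≤ A.rank := by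
  have hh : h ≠ 0 := by omega
  obtain ⟨K, fK, aK, ftK, hfd, hrk⟩ := MRD.exists_finite_ext F h hh
  exact @MRD.main F K _ _ fK aK ftK hfd m h d hmh hd1 hd2 hrk
end

section
/- Let S and T be m-dimensional subspaces of F_q^n with identifying vectors v(S) and v(T) (the binary vectors recording pivot-column positions of the reduced row echelon form bases). Then dim(S ∩ T) ≤ w_H(v(S) ⋆ v(T)), the number of common pivot positions. -/
open Module

/-- The pivot positions of a subspace `S ≤ F^n`: the positions that occur as the leading
(first nonzero) coordinate of some nonzero vector of `S`.  These are exactly the columns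
in which the reduced row echelon form basis matrix of `S` has a leading `1`, i.e. the
support of the identifying vector `v(S)`. -/
def pivots (F : Type) [Field F] (n : ℕ) (S : Submodule F (Fin n → F)) : Set (Fin n) :=
  {i | ∃ x ∈ S, x i ≠ 0 ∧ ∀ j < i, x j = 0}

lemma finrank_le_ncard_pivots (F : Type) [Field F] (n : ℕ)
    (U : Submodule F (Fin n → F)) :
    finrank F U ≤ (pivots F n U).ncard := by
  classical
  set s : Set (Fin n) := pivots F n U with hs
  have hfin : s.Finite := Set.toFinite s
  let φ : U →ₗ[F] (s → F) :=
    (LinearMap.funLeft F F (Subtype.val : s → Fin n)).comp U.subtype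
  have hinj : Function.Injective φ := by
    rw [← LinearMap.ker_eq_bot, LinearMap.ker_eq_bot']
    intro x hx
    by_contra hx0
    have hxv : (x : Fin n → F) ≠ 0 := by
      simpa [Submodule.coe_eq_zero] using hx0
    have hne : (Finset.univ.filter (fun i => (x : Fin n → F) i ≠ 0)).Nonempty := by
      rcases Function.ne_iff.mp hxv with ⟨i, hi⟩
      exact ⟨i, by simpa using hi⟩
    set i := (Finset.univ.filter (fun i => (x : Fin n → F) i ≠ 0)).min' hne with hi
    have himem := Finset.min'_mem _ hne
    rw [Finset.mem_filter] at himem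
    have hzero : ∀ j < i, (x : Fin n → F) j = 0 := by
      intro j hj
      by_contra hj0
      have : i ≤ j := Finset.min'_le _ _ (by simpa using hj0)
      exact absurd hj (not_lt.mpr this)
    have hpiv : i ∈ s := ⟨x, x.2, himem.2, hzero⟩
    have := congrFun hx ⟨i, hpiv⟩
    exact himem.2 this
  have h1 : finrank F U ≤ finrank F (s → F) :=
    LinearMap.finrank_le_finrank_of_injective hinj
  haveI : Fintype s := hfin.fintype
  rw [Module.finrank_fintype_fun_eq_card] at h1
  rwa [Set.ncard_eq_toFinset_card', Set.toFinset_card]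

/-- For `m`-dimensional subspaces `S, T` of `F_q^n`,
`dim(S ∩ T) ≤ w_H(v(S) ⋆ v(T))`, the number of common pivot positions. -/
theorem finrank_inf_le_common_pivots (F : Type) [Field F] [Fintype F] (n m : ℕ)
    (hmn : m ≤ n) (S T : Submodule F (Fin n → F))
    (hS : finrank F S = m) (hT : finrank F T = m) :
    finrank F (S ⊓ T : Submodule F (Fin n → F))
      ≤ (pivots F n S ∩ pivots F n T).ncard := by
  refine le_trans (finrank_le_ncard_pivots F n (S ⊓ T)) ?_
  apply Set.ncard_le_ncard _ (Set.toFinite _)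
  rintro i ⟨x, hx, hxi, hlead⟩
  exact ⟨⟨x, hx.1, hxi, hlead⟩, ⟨x, hx.2, hxi, hlead⟩⟩
end
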